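/- arXiv:1711.07778 — 4 statements merged into one kernel-verified Lean document; each statement's English description precedes it below -/
import Mathlib

section
/- Let Θ : ℝ^d → ℂ be a function with Θ(0) = 0. Then Θ is negative definite (in the sense of Schoenberg) if and only if for every t > 0 the function x ↦ exp(−tΘ(x)) is positive definite. -/
open scoped ComplexOrder
/-- A function `f : ℝ^d → ℂ` is positive definite if for every `m ∈ ℕ` and all
`x₁, …, x_m ∈ ℝ^d` the matrix `(f (x i - x j))_{i,j}` is positive semidefinite Hermitian. -/
def IsPosDefFn {d : ℕ} (f : EuclideanSpace ℝ (Fin d) → ℂ) : Prop :=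
  ∀ (m : ℕ) (x : Fin m → EuclideanSpace ℝ (Fin d)),
    (Matrix.of fun i j => f (x i - x j)).PosSemidef

/-- A function `Θ : ℝ^d → ℂ` is negative definite (in the sense of Schoenberg) if for every
`m ∈ ℕ` and all `x₁, …, x_m ∈ ℝ^d` the matrix
`(Θ (x i) + conj (Θ (x j)) - Θ (x i - x j))_{i,j}` is positive semidefinite Hermitian. -/
def IsNegDefFn {d : ℕ} (Θ : EuclideanSpace ℝ (Fin d) → ℂ) : Prop :=
  ∀ (m : ℕ) (x : Fin m → EuclideanSpace ℝ (Fin d)),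
    (Matrix.of fun i j =>
      Θ (x i) + (starRingEnd ℂ) (Θ (x j)) - Θ (x i - x j)).PosSemidef

/-!
Write `N = (Θ xᵢ + conj (Θ xⱼ) - Θ (xᵢ - xⱼ))ᵢⱼ`. Since
`exp (-t Θ (xᵢ - xⱼ)) = exp (-t Θ xᵢ) · exp (t Nᵢⱼ) · conj (exp (-t Θ xⱼ))`, the forward direction
is Schur's product theorem, summed along the exponential series (entrywise exponentials of positive
semidefinite matrices are positive semidefinite), followed by a diagonal congruence.
Conversely, if `f` is positive definite then the matrix `f (xᵢ - xⱼ) - f xᵢ - conj (f xⱼ) + f 0`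
is positive semidefinite, being a congruence of the matrix of `f` at `0, x₁, …, x_m`.
For `f = exp (-t Θ)` this matrix vanishes at `t = 0` and its right derivative there is `N`
(as `Θ 0 = 0`); positive semidefinite matrices form a closed cone, so `N` is positive semidefinite.
-/

open Matrix Filter Topology ComplexConjugate

namespace Matrix

variable {n 𝕜 : Type*} [Fintype n] [RCLike 𝕜]

theorem isClosed_setOf_posSemidef : IsClosed {A : Matrix n n 𝕜 | A.PosSemidef} := by
  simp only [posSemidef_iff_dotProduct_mulVec, Set.ofPred_and, Set.ofPred_forall]
  refine (isClosed_eq (by fun_prop) continuous_id).inter (isClosed_iInter fun x => ?_)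
  exact isClosed_le continuous_const (by fun_prop)

theorem PosSemidef.of_tendsto {α : Type*} {l : Filter α} [l.NeBot] {M : α → Matrix n n 𝕜}
    {A : Matrix n n 𝕜} (hM : ∀ᶠ a in l, (M a).PosSemidef) (h : Tendsto M l (𝓝 A)) :
    A.PosSemidef :=
  isClosed_setOf_posSemidef.mem_of_tendsto h hM

theorem PosSemidef.map_pow {A : Matrix n n 𝕜} (hA : A.PosSemidef) (k : ℕ) :
    (A.map (· ^ k)).PosSemidef := by
  induction k with
  | zero =>
    convert posSemidef_vecMulVec_self_star (1 : n → 𝕜) using 1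
    ext i j
    simp [vecMulVec]
  | succ k ih =>
    convert ih.hadamard hA using 1
    ext i j
    simp [pow_succ]

theorem PosSemidef.map_exp {A : Matrix n n 𝕜} (hA : A.PosSemidef) :
    (A.map NormedSpace.exp).PosSemidef := by
  refine .of_tendsto (l := atTop)
    (M := fun N => ∑ k ∈ Finset.range N, (k.factorial : ℝ)⁻¹ • A.map (· ^ k))
    (.of_forall fun N => posSemidef_sum _ fun k _ => (hA.map_pow k).smul (by positivity)) ?_
  refine tendsto_pi_nhds.2 fun i => tendsto_pi_nhds.2 fun j => ?_
  simpa [sum_apply] using (NormedSpace.exp_series_hasSum_exp' (𝕂 := ℝ) (A i j)).tendsto_sum_nat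

theorem PosSemidef.of_hasDerivWithinAt {M : ℝ → Matrix n n 𝕜} {A : Matrix n n 𝕜} (h0 : M 0 = 0)
    (hM : ∀ t > 0, (M t).PosSemidef)
    (hA : ∀ i j, HasDerivWithinAt (fun t => M t i j) (A i j) (Set.Ioi 0) 0) :
    A.PosSemidef := by
  refine .of_tendsto (l := 𝓝[>] 0) (M := fun t => t⁻¹ • M t) ?_ ?_
  · filter_upwards [self_mem_nhdsWithin] with t ht using (hM t ht).smul (inv_nonneg.2 ht.le)
  · refine tendsto_pi_nhds.2 fun i => tendsto_pi_nhds.2 fun j => ?_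
    convert hasDerivWithinAt_iff_tendsto_slope.1 (hA i j) using 1
    · ext t
      simp [slope_def_module, h0]
    · simp

end Matrix

section

variable {d : ℕ}

theorem IsPosDefFn.posSemidef_increment {f : EuclideanSpace ℝ (Fin d) → ℂ} (hf : IsPosDefFn f)
    {m : ℕ} (x : Fin m → EuclideanSpace ℝ (Fin d)) :
    (of fun i j => f (x i - x j) - f (x i) - conj (f (x j)) + f 0).PosSemidef := by
  set y : Fin (m + 1) → EuclideanSpace ℝ (Fin d) := Fin.cons 0 x
  have hP := hf (m + 1) y
  have hconj : ∀ j, conj (f (x j)) = f (-x j) := fun j => by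
    simpa [y] using hP.isHermitian.apply 0 j.succ
  -- `E` has rows `-1, e₁, …, e_m`, so for the matrix `P` of `hP`,
  -- `(Eᴴ P E) i j = P (i+1) (j+1) - P (i+1) 0 - P 0 (j+1) + P 0 0`.
  set E : Matrix (Fin (m + 1)) (Fin m) ℂ :=
    of fun k j => Fin.cases (-1) (fun i => (1 : Matrix (Fin m) (Fin m) ℂ) i j) k
  convert hP.conjTranspose_mul_mul_same E using 1
  ext i j
  simp [Matrix.mul_apply, Fin.sum_univ_succ, E, y, hconj, one_apply]
  ring

theorem IsNegDefFn.isPosDefFn_exp {Θ : EuclideanSpace ℝ (Fin d) → ℂ} (hΘ : IsNegDefFn Θ)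
    {t : ℝ} (ht : 0 ≤ t) : IsPosDefFn fun x => Complex.exp (-t * Θ x) := by
  intro m x
  set D : Matrix (Fin m) (Fin m) ℂ := diagonal fun i => Complex.exp (-t * Θ (x i))
  have hexp := ((hΘ m x).smul ht).map_exp.mul_mul_conjTranspose_same D
  suffices h : (of fun i j => Complex.exp (-t * Θ (x i - x j))) =
      D * (t • of fun i j => Θ (x i) + conj (Θ (x j)) - Θ (x i - x j)).map NormedSpace.exp * Dᴴ by
    rw [h]; exact hexp
  ext i j
  simp [D, diagonal_conjTranspose, mul_diagonal, diagonal_mul, ← Complex.exp_eq_exp_ℂ,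
    ← Complex.exp_conj, ← Complex.exp_add]
  ring_nf

theorem hasDerivAt_cexp_neg_mul (z : ℂ) :
    HasDerivAt (fun t : ℝ => Complex.exp (-t * z)) (-z) 0 := by
  simpa using ((Complex.ofRealCLM.hasDerivAt (x := 0)).neg.mul_const z).cexp

theorem isNegDefFn_of_isPosDefFn_exp {Θ : EuclideanSpace ℝ (Fin d) → ℂ} (h0 : Θ 0 = 0)
    (h : ∀ t : ℝ, 0 < t → IsPosDefFn fun x => Complex.exp (-t * Θ x)) : IsNegDefFn Θ := by
  intro m x
  refine PosSemidef.of_hasDerivWithinAt (M := fun t => of fun i j =>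
      Complex.exp (-t * Θ (x i - x j)) - Complex.exp (-t * Θ (x i))
        - conj (Complex.exp (-t * Θ (x j))) + Complex.exp (-t * Θ 0))
    ?_ (fun t ht => (h t ht).posSemidef_increment x) fun i j => ?_
  · ext i j
    simp
  · have hD := ((((hasDerivAt_cexp_neg_mul (Θ (x i - x j))).sub
      (hasDerivAt_cexp_neg_mul (Θ (x i)))).sub (hasDerivAt_cexp_neg_mul (Θ (x j))).star).add
      (hasDerivAt_cexp_neg_mul (Θ 0))).hasDerivWithinAt (s := Set.Ioi 0)
    refine hD.congr_deriv ?_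
    simp [h0]
    ring

end

/-- For `Θ : ℝ^d → ℂ` with `Θ 0 = 0`, `Θ` is negative definite (in the sense of Schoenberg)
if and only if for every `t > 0` the function `x ↦ exp (-t Θ x)` is positive definite. -/
theorem negDef_iff_exp_posDef {d : ℕ} (Θ : EuclideanSpace ℝ (Fin d) → ℂ)
    (hΘ0 : Θ 0 = 0) :
    IsNegDefFn Θ ↔
      ∀ t : ℝ, 0 < t → IsPosDefFn (fun x => Complex.exp (-(t : ℂ) * Θ x)) :=
  ⟨fun hΘ _ ht => hΘ.isPosDefFn_exp ht.le, isNegDefFn_of_isPosDefFn_exp hΘ0⟩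
end

section
/- Let ρ be a symmetric Lévy measure on ℝ^d∖{0} with full support and Θ(u) = ∫(1 − cos⟨u,r⟩) ρ(dr) the associated real-valued continuous negative definite function. If U, V are d-dimensional random variables and (U′,V′) is an independent copy of (U,V) (so that U,U′ are identically distributed, V,V′ are identically distributed, and (U,V) is independent of (U′,V′)), then E[Θ(U − U′)] + E[Θ(V − V′)] ≤ 2 E[Θ(U − V′)] in [0,∞]. -/
open MeasureTheory ProbabilityTheory
open scoped ENNReal RealInnerProductSpace

/-- `ρ` is a Lévy measure on `ℝ^d ∖ {0}`: it does not charge the origin and integrates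
`1 ∧ |r|²`. -/
def IsLevyMeasure {d : ℕ} (ρ : Measure (EuclideanSpace ℝ (Fin d))) : Prop :=
  ρ {0} = 0 ∧ ∫⁻ r, ENNReal.ofReal (min 1 (‖r‖ ^ 2)) ∂ρ < ∞

/-- `ρ` is symmetric: `ρ(B) = ρ(-B)` for all Borel sets `B`. -/
def IsSymmetricMeasure {d : ℕ} (ρ : Measure (EuclideanSpace ℝ (Fin d))) : Prop :=
  ρ.map (fun r => -r) = ρ

/-- `ρ` has full (topological) support on `ℝ^d ∖ {0}`: every nonempty open set avoiding the
origin has positive measure. -/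
def HasFullSupportOffZero {d : ℕ} (ρ : Measure (EuclideanSpace ℝ (Fin d))) : Prop :=
  ∀ G : Set (EuclideanSpace ℝ (Fin d)), IsOpen G → G.Nonempty →
    (0 : EuclideanSpace ℝ (Fin d)) ∉ G → 0 < ρ G

/-- The real-valued continuous negative definite function
`Θ(u) = ∫ (1 - cos ⟪u, r⟫) ρ(dr)` associated to `ρ`, with values in `[0,∞]`. -/
noncomputable def levyCndf {d : ℕ} (ρ : Measure (EuclideanSpace ℝ (Fin d)))
    (u : EuclideanSpace ℝ (Fin d)) : ℝ≥0∞ :=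
  ∫⁻ r, ENNReal.ofReal (1 - Real.cos ⟪u, r⟫) ∂ρ

/-!
By Tonelli (a Lévy measure is σ-finite) it suffices to compare, for each fixed `r`, the
expectations of `1 - cos ⟪·, r⟫` in place of `Θ`. With `a + ib = E exp (i⟪U, r⟫)` and
`c + ie = E exp (i⟪V, r⟫)`, independence and equality of laws give `E cos ⟪U - U', r⟫ = a² + b²`,
`E cos ⟪V - V', r⟫ = c² + e²` and `E cos ⟪U - V', r⟫ = ac + be`, so the pointwise inequality is
`(a - c)² + (b - e)² ≥ 0`.
-/

open Real

theorem MeasureTheory.sigmaFinite_of_lintegral_lt_top {α : Type*} [MeasurableSpace α]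
    {μ : Measure α} {f : α → ℝ≥0∞} (hf : AEMeasurable f μ) (hfin : ∫⁻ x, f x ∂μ < ∞)
    (hzero : μ {x | f x = 0} < ∞) : SigmaFinite μ := by
  refine Measure.sigmaFinite_of_countable
    (S := insert {x | f x = 0} (Set.range fun n : ℕ => {x | ((n : ℝ≥0∞) + 1)⁻¹ ≤ f x}))
    ((Set.countable_range _).insert _) ?_ ?_
  · rintro s (rfl | ⟨n, rfl⟩)
    · exact hzero
    · exact (meas_ge_le_lintegral_div hf (by simp) (by simp)).trans_lt
        (ENNReal.div_lt_top hfin.ne (by simp))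
  · refine Set.eq_univ_of_forall fun x => ?_
    by_cases hx : f x = 0
    · exact Set.mem_sUnion_of_mem hx (Set.mem_insert _ _)
    · obtain ⟨n, hn⟩ := ENNReal.exists_inv_nat_lt hx
      refine Set.mem_sUnion_of_mem ?_ (Set.mem_insert_of_mem _ ⟨n, rfl⟩)
      exact le_trans (ENNReal.inv_le_inv.2 le_self_add) hn.le

theorem IsLevyMeasure.sigmaFinite {d : ℕ} {ρ : Measure (EuclideanSpace ℝ (Fin d))}
    (hρ : IsLevyMeasure ρ) : SigmaFinite ρ := by
  refine sigmaFinite_of_lintegral_lt_top (by fun_prop) hρ.2 ?_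
  have : {r : EuclideanSpace ℝ (Fin d) | ENNReal.ofReal (min 1 (‖r‖ ^ 2)) = 0} = {0} := by
    ext r
    simp
  rw [this, hρ.1]
  exact ENNReal.zero_lt_top

theorem ProbabilityTheory.IdentDistrib.integral_comp_eq {α β γ E : Type*} [MeasurableSpace α]
    [MeasurableSpace β] [MeasurableSpace γ] [NormedAddCommGroup E] [NormedSpace ℝ E]
    [MeasurableSpace E] [BorelSpace E] {μ : Measure α} {ν : Measure β} {f : α → γ} {g : β → γ}
    (h : IdentDistrib f g μ ν) {φ : γ → E} (hφ : Measurable φ) :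
    ∫ x, φ (f x) ∂μ = ∫ x, φ (g x) ∂ν :=
  (h.comp hφ).integral_eq

section CosMoments

variable {Ω : Type*} [MeasurableSpace Ω] {P : Measure Ω}

theorem integrable_cos_comp [IsFiniteMeasure P] {f : Ω → ℝ} (hf : AEMeasurable f P) :
    Integrable (fun ω => cos (f ω)) P :=
  .of_bound (by fun_prop) 1 (.of_forall fun ω => by simpa using abs_cos_le_one (f ω))

theorem integrable_sin_comp [IsFiniteMeasure P] {f : Ω → ℝ} (hf : AEMeasurable f P) :
    Integrable (fun ω => sin (f ω)) P :=
  .of_bound (by fun_prop) 1 (.of_forall fun ω => by simpa using abs_sin_le_one (f ω))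

theorem integral_cos_comp_le_one [IsProbabilityMeasure P] {f : Ω → ℝ} (hf : AEMeasurable f P) :
    ∫ ω, cos (f ω) ∂P ≤ 1 :=
  calc ∫ ω, cos (f ω) ∂P ≤ ∫ _, (1 : ℝ) ∂P :=
        integral_mono (integrable_cos_comp hf) (integrable_const 1) fun ω => cos_le_one _
    _ = 1 := by simp

theorem lintegral_ofReal_one_sub_cos_comp [IsProbabilityMeasure P] {f : Ω → ℝ}
    (hf : AEMeasurable f P) :
    ∫⁻ ω, ENNReal.ofReal (1 - cos (f ω)) ∂P = ENNReal.ofReal (1 - ∫ ω, cos (f ω) ∂P) := by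
  have hint : Integrable (fun ω => 1 - cos (f ω)) P :=
    (integrable_const 1).sub (integrable_cos_comp hf)
  rw [← ofReal_integral_eq_lintegral_ofReal hint (.of_forall fun ω => sub_nonneg.2 (cos_le_one _)),
    integral_sub (integrable_const 1) (integrable_cos_comp hf), integral_const, probReal_univ,
    one_smul]

theorem ProbabilityTheory.IndepFun.integral_cos_sub [IsProbabilityMeasure P] {X Y : Ω → ℝ}
    (hX : AEMeasurable X P) (hY : AEMeasurable Y P) (h : IndepFun X Y P) :
    ∫ ω, cos (X ω - Y ω) ∂P =
      (∫ ω, cos (X ω) ∂P) * (∫ ω, cos (Y ω) ∂P) + (∫ ω, sin (X ω) ∂P) * ∫ ω, sin (Y ω) ∂P := by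
  have hcos : ∫ ω, cos (X ω) * cos (Y ω) ∂P = (∫ ω, cos (X ω) ∂P) * ∫ ω, cos (Y ω) ∂P :=
    (h.comp measurable_cos measurable_cos).integral_fun_mul_eq_mul_integral (by fun_prop)
      (by fun_prop)
  have hsin : ∫ ω, sin (X ω) * sin (Y ω) ∂P = (∫ ω, sin (X ω) ∂P) * ∫ ω, sin (Y ω) ∂P :=
    (h.comp measurable_sin measurable_sin).integral_fun_mul_eq_mul_integral (by fun_prop)
      (by fun_prop)
  simp_rw [cos_sub]
  rw [integral_add ((integrable_cos_comp hY).bdd_mul (by fun_prop)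
      (.of_forall fun ω => abs_cos_le_one (X ω)))
    ((integrable_sin_comp hY).bdd_mul (by fun_prop) (.of_forall fun ω => abs_sin_le_one (X ω))),
    hcos, hsin]

theorem two_mul_integral_cos_sub_le [IsProbabilityMeasure P] {X Y X' Y' : Ω → ℝ}
    (hX : IdentDistrib X X' P P) (hY : IdentDistrib Y Y' P P)
    (hXX' : IndepFun X X' P) (hYY' : IndepFun Y Y' P) (hXY' : IndepFun X Y' P) :
    2 * ∫ ω, cos (X ω - Y' ω) ∂P ≤ ∫ ω, cos (X ω - X' ω) ∂P + ∫ ω, cos (Y ω - Y' ω) ∂P := by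
  rw [hXX'.integral_cos_sub hX.aemeasurable_fst hX.aemeasurable_snd,
    hYY'.integral_cos_sub hY.aemeasurable_fst hY.aemeasurable_snd,
    hXY'.integral_cos_sub hX.aemeasurable_fst hY.aemeasurable_snd,
    ← hX.integral_comp_eq measurable_cos, ← hX.integral_comp_eq measurable_sin,
    ← hY.integral_comp_eq measurable_cos, ← hY.integral_comp_eq measurable_sin]
  nlinarith [sq_nonneg ((∫ ω, cos (X ω) ∂P) - ∫ ω, cos (Y ω) ∂P),
    sq_nonneg ((∫ ω, sin (X ω) ∂P) - ∫ ω, sin (Y ω) ∂P)]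

theorem lintegral_ofReal_one_sub_cos_sub_add_le [IsProbabilityMeasure P] {X Y X' Y' : Ω → ℝ}
    (hX : IdentDistrib X X' P P) (hY : IdentDistrib Y Y' P P)
    (hXX' : IndepFun X X' P) (hYY' : IndepFun Y Y' P) (hXY' : IndepFun X Y' P) :
    ∫⁻ ω, ENNReal.ofReal (1 - cos (X ω - X' ω)) ∂P + ∫⁻ ω, ENNReal.ofReal (1 - cos (Y ω - Y' ω)) ∂P
      ≤ 2 * ∫⁻ ω, ENNReal.ofReal (1 - cos (X ω - Y' ω)) ∂P := by
  have hXX'm := hX.aemeasurable_fst.fun_sub hX.aemeasurable_snd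
  have hYY'm := hY.aemeasurable_fst.fun_sub hY.aemeasurable_snd
  have hXY'm := hX.aemeasurable_fst.fun_sub hY.aemeasurable_snd
  rw [lintegral_ofReal_one_sub_cos_comp hXX'm, lintegral_ofReal_one_sub_cos_comp hYY'm,
    lintegral_ofReal_one_sub_cos_comp hXY'm,
    ← ENNReal.ofReal_add (sub_nonneg.2 (integral_cos_comp_le_one hXX'm))
      (sub_nonneg.2 (integral_cos_comp_le_one hYY'm)),
    ← ENNReal.ofReal_ofNat 2, ← ENNReal.ofReal_mul zero_le_two]
  refine ENNReal.ofReal_le_ofReal ?_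
  linarith [two_mul_integral_cos_sub_le hX hY hXX' hYY' hXY']

end CosMoments

theorem lintegral_levyCndf_comp {d : ℕ} (ρ : Measure (EuclideanSpace ℝ (Fin d))) [SFinite ρ]
    {Ω : Type*} [MeasurableSpace Ω] {P : Measure Ω} [SFinite P]
    {W : Ω → EuclideanSpace ℝ (Fin d)} (hW : AEMeasurable W P) :
    ∫⁻ ω, levyCndf ρ (W ω) ∂P = ∫⁻ r, ∫⁻ ω, ENNReal.ofReal (1 - cos ⟪W ω, r⟫) ∂P ∂ρ := by
  have hWr : AEMeasurable (fun p : Ω × EuclideanSpace ℝ (Fin d) => (W p.1, p.2)) (P.prod ρ) :=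
    (hW.comp_quasiMeasurePreserving Measure.quasiMeasurePreserving_fst).prodMk
      measurable_snd.aemeasurable
  have hcos : Measurable fun x : EuclideanSpace ℝ (Fin d) × EuclideanSpace ℝ (Fin d) =>
      ENNReal.ofReal (1 - cos ⟪x.1, x.2⟫) := by
    fun_prop
  have hf := hcos.comp_aemeasurable hWr
  unfold levyCndf
  exact lintegral_lintegral_swap (f := fun ω r => ENNReal.ofReal (1 - cos ⟪W ω, r⟫)) hf

theorem levyCndf_sum_le_two_mul_cross_general {d : ℕ}
    (ρ : Measure (EuclideanSpace ℝ (Fin d)))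
    (hLevy : IsLevyMeasure ρ)
    {Ω : Type*} [MeasurableSpace Ω] (P : Measure Ω) [IsProbabilityMeasure P]
    (U V U' V' : Ω → EuclideanSpace ℝ (Fin d))
    (hidU : IdentDistrib U U' P P) (hidV : IdentDistrib V V' P P)
    (hindep : IndepFun (fun ω => (U ω, V ω)) (fun ω => (U' ω, V' ω)) P) :
    (∫⁻ ω, levyCndf ρ (U ω - U' ω) ∂P) + (∫⁻ ω, levyCndf ρ (V ω - V' ω) ∂P)
      ≤ 2 * ∫⁻ ω, levyCndf ρ (U ω - V' ω) ∂P := by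
  have := hLevy.sigmaFinite
  rw [lintegral_levyCndf_comp ρ (hidU.aemeasurable_fst.fun_sub hidU.aemeasurable_snd),
    lintegral_levyCndf_comp ρ (hidV.aemeasurable_fst.fun_sub hidV.aemeasurable_snd),
    lintegral_levyCndf_comp ρ (hidU.aemeasurable_fst.fun_sub hidV.aemeasurable_snd),
    ← lintegral_const_mul' _ _ ENNReal.ofNat_ne_top]
  refine (le_lintegral_add _ _).trans (lintegral_mono fun r => ?_)
  have hr : Measurable fun x : EuclideanSpace ℝ (Fin d) => ⟪x, r⟫ := by fun_prop
  simp only [inner_sub_left]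
  exact lintegral_ofReal_one_sub_cos_sub_add_le (hidU.comp hr) (hidV.comp hr)
    (hindep.comp (hr.comp measurable_fst) (hr.comp measurable_fst))
    (hindep.comp (hr.comp measurable_snd) (hr.comp measurable_snd))
    (hindep.comp (hr.comp measurable_fst) (hr.comp measurable_snd))

/-- Let `ρ` be a symmetric Lévy measure with full support and `Θ` the associated cndf.
If `(U', V')` is an independent copy of `(U, V)` (i.e. `U, U'` are identically distributed,
`V, V'` are identically distributed, and `(U, V)` is independent of `(U', V')`), then
`E[Θ(U - U')] + E[Θ(V - V')] ≤ 2 E[Θ(U - V')]` in `[0, ∞]`. -/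
theorem levyCndf_sum_le_two_mul_cross {d : ℕ}
    (ρ : Measure (EuclideanSpace ℝ (Fin d)))
    (hLevy : IsLevyMeasure ρ) (hsym : IsSymmetricMeasure ρ)
    (hfull : HasFullSupportOffZero ρ)
    {Ω : Type*} [MeasurableSpace Ω] (P : Measure Ω) [IsProbabilityMeasure P]
    (U V U' V' : Ω → EuclideanSpace ℝ (Fin d))
    (hU : Measurable U) (hV : Measurable V) (hU' : Measurable U') (hV' : Measurable V')
    (hidU : IdentDistrib U U' P P) (hidV : IdentDistrib V V' P P)
    (hindep : IndepFun (fun ω => (U ω, V ω)) (fun ω => (U' ω, V' ω)) P) :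
    (∫⁻ ω, levyCndf ρ (U ω - U' ω) ∂P) + (∫⁻ ω, levyCndf ρ (V ω - V' ω) ∂P)
      ≤ 2 * ∫⁻ ω, levyCndf ρ (U ω - V' ω) ∂P :=
  levyCndf_sum_le_two_mul_cross_general ρ hLevy P U V U' V' hidU hidV hindep
end

section
/- Let μ and ν be finite symmetric Lévy measures on ℝ^m∖{0} and ℝ^n∖{0} with associated continuous negative definite functions Φ(x) = ∫(1 − cos⟨x,s⟩) μ(ds) and Ψ(y) = ∫(1 − cos⟨y,t⟩) ν(dt), and let Θ(x,y) = ∬(1 − cos(⟨x,s⟩ + ⟨y,t⟩)) μ(ds) ν(dt) be the continuous negative definite function associated with the product measure μ ⊗ ν on ℝ^{m+n}. Then for all x ∈ ℝ^m and y ∈ ℝ^n: Θ(x,y) = Ψ(y) μ(ℝ^m) + Φ(x) ν(ℝ^n) − Φ(x) Ψ(y). -/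
open MeasureTheory
open scoped ENNReal RealInnerProductSpace

/-! Writing `cos (a + ⟪y,t⟫) = cos a cos ⟪y,t⟫ - sin a sin ⟪y,t⟫`, the sine term integrates to zero
against the symmetric measure `ν`, so the inner integral is `ν(ℝⁿ) - cos a · ∫ cos ⟪y,t⟫ dν`.
Integrating in `s` and substituting `∫ cos = total mass - Φ` (resp. `- Ψ`) gives the identity. -/

section FiniteMeasure

variable {E : Type*} [NormedAddCommGroup E] [InnerProductSpace ℝ E] [MeasurableSpace E]
  [OpensMeasurableSpace E] (ρ : Measure E) [IsFiniteMeasure ρ]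

lemma integrable_comp_inner_of_abs_le_one {f : ℝ → ℝ} (hf : Continuous f)
    (hf_le : ∀ a, |f a| ≤ 1) (z : E) : Integrable (fun t => f ⟪z, t⟫) ρ :=
  (integrable_const (1 : ℝ)).mono'
    (hf.comp (continuous_const.inner continuous_id)).aestronglyMeasurable
    (ae_of_all _ fun t => by simpa using hf_le _)

lemma integrable_cos_inner (z : E) : Integrable (fun t => Real.cos ⟪z, t⟫) ρ :=
  integrable_comp_inner_of_abs_le_one ρ Real.continuous_cos Real.abs_cos_le_one z

lemma integrable_sin_inner (z : E) : Integrable (fun t => Real.sin ⟪z, t⟫) ρ :=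
  integrable_comp_inner_of_abs_le_one ρ Real.continuous_sin Real.abs_sin_le_one z

lemma integral_one_sub_cos_inner (z : E) :
    ∫ t, (1 - Real.cos ⟪z, t⟫) ∂ρ = ρ.real Set.univ - ∫ t, Real.cos ⟪z, t⟫ ∂ρ := by
  rw [integral_sub (integrable_const 1) (integrable_cos_inner ρ z), integral_const, smul_eq_mul,
    mul_one]

end FiniteMeasure

namespace IsSymmetricMeasure

variable {d : ℕ} {ρ : Measure (EuclideanSpace ℝ (Fin d))}

lemma integral_comp_neg (hρ : IsSymmetricMeasure ρ) (f : EuclideanSpace ℝ (Fin d) → ℝ) :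
    ∫ t, f (-t) ∂ρ = ∫ t, f t ∂ρ := by
  conv_rhs => rw [← hρ]
  exact (integral_map_equiv (MeasurableEquiv.neg _) f).symm

lemma integral_sin_inner (hρ : IsSymmetricMeasure ρ) (z : EuclideanSpace ℝ (Fin d)) :
    ∫ t, Real.sin ⟪z, t⟫ ∂ρ = 0 := by
  have h := hρ.integral_comp_neg fun t => Real.sin ⟪z, t⟫
  simp only [inner_neg_right, Real.sin_neg, integral_neg] at h
  linarith

lemma integral_one_sub_cos_add_inner [IsFiniteMeasure ρ] (hρ : IsSymmetricMeasure ρ) (a : ℝ)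
    (z : EuclideanSpace ℝ (Fin d)) :
    ∫ t, (1 - Real.cos (a + ⟪z, t⟫)) ∂ρ
      = ρ.real Set.univ - Real.cos a * ∫ t, Real.cos ⟪z, t⟫ ∂ρ := by
  have hcos := (integrable_cos_inner ρ z).const_mul (Real.cos a)
  have hsin := (integrable_sin_inner ρ z).const_mul (Real.sin a)
  have hdiff : Integrable (fun t => 1 - Real.cos a * Real.cos ⟪z, t⟫) ρ :=
    (integrable_const 1).sub hcos
  simp_rw [Real.cos_add, sub_sub_eq_add_sub, add_sub_right_comm]
  rw [integral_add hdiff hsin, integral_sub (integrable_const 1) hcos,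
    integral_const_mul, integral_const_mul, hρ.integral_sin_inner, integral_const, smul_eq_mul,
    mul_one, mul_zero, add_zero]

end IsSymmetricMeasure

theorem prod_cndf_eq_general {m n : ℕ}
    (μ : Measure (EuclideanSpace ℝ (Fin m))) (ν : Measure (EuclideanSpace ℝ (Fin n)))
    [IsFiniteMeasure μ] [IsFiniteMeasure ν]
    (hνsym : IsSymmetricMeasure ν)
    (x : EuclideanSpace ℝ (Fin m)) (y : EuclideanSpace ℝ (Fin n)) :
    (∫ s, ∫ t, (1 - Real.cos (⟪x, s⟫ + ⟪y, t⟫)) ∂ν ∂μ)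
      = (∫ t, (1 - Real.cos ⟪y, t⟫) ∂ν) * (μ Set.univ).toReal
        + (∫ s, (1 - Real.cos ⟪x, s⟫) ∂μ) * (ν Set.univ).toReal
        - (∫ s, (1 - Real.cos ⟪x, s⟫) ∂μ) * ∫ t, (1 - Real.cos ⟪y, t⟫) ∂ν := by
  simp_rw [hνsym.integral_one_sub_cos_add_inner, integral_one_sub_cos_inner, ← measureReal_def]
  rw [integral_sub (integrable_const _) ((integrable_cos_inner μ x).mul_const _), integral_const,
    integral_mul_const, smul_eq_mul]
  ring

/-- Let `μ, ν` be finite symmetric Lévy measures on `ℝ^m ∖ {0}` and `ℝ^n ∖ {0}` with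
associated cndfs `Φ(x) = ∫ (1 - cos ⟪x,s⟫) μ(ds)`, `Ψ(y) = ∫ (1 - cos ⟪y,t⟫) ν(dt)`, and
let `Θ(x,y) = ∬ (1 - cos (⟪x,s⟫ + ⟪y,t⟫)) μ(ds) ν(dt)` be the cndf of the product measure
`μ ⊗ ν`. Then `Θ(x,y) = Ψ(y) μ(ℝ^m) + Φ(x) ν(ℝ^n) - Φ(x) Ψ(y)`. -/
theorem prod_cndf_eq {m n : ℕ}
    (μ : Measure (EuclideanSpace ℝ (Fin m))) (ν : Measure (EuclideanSpace ℝ (Fin n)))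
    [IsFiniteMeasure μ] [IsFiniteMeasure ν]
    (hμ0 : μ {0} = 0) (hν0 : ν {0} = 0)
    (hμsym : IsSymmetricMeasure μ) (hνsym : IsSymmetricMeasure ν)
    (x : EuclideanSpace ℝ (Fin m)) (y : EuclideanSpace ℝ (Fin n)) :
    (∫ s, ∫ t, (1 - Real.cos (⟪x, s⟫ + ⟪y, t⟫)) ∂ν ∂μ)
      = (∫ t, (1 - Real.cos ⟪y, t⟫) ∂ν) * (μ Set.univ).toReal
        + (∫ s, (1 - Real.cos ⟪x, s⟫) ∂μ) * (ν Set.univ).toReal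
        - (∫ s, (1 - Real.cos ⟪x, s⟫) ∂μ) * ∫ t, (1 - Real.cos ⟪y, t⟫) ∂ν :=
  prod_cndf_eq_general μ ν hνsym x y
end

section
/- Let Φ : ℝ^m → ℝ and Ψ : ℝ^n → ℝ be the continuous negative definite functions associated to finite symmetric Lévy measures with full support, and let (x₁,y₁),…,(x_N,y_N) be a sample in ℝ^m × ℝ^n. Define the sample generalized distance covariance V̂_N² := (1/N⁴) Σ_{i,j,k,l=1}^N [Φ(x_i − x_k) Ψ(y_i − y_k) − 2 Φ(x_i − x_j) Ψ(y_i − y_l) + Φ(x_i − x_j) Ψ(y_k − y_l)]. Then V̂_N² = (1/N²) trace(Bᵀ A) = (1/N²) Σ_{k,l=1}^N A_{kl} B_{kl}, where A = Cᵀ a C with a = (Φ(x_k − x_l))_{k,l=1,…,N}, B = Cᵀ b C with b = (Ψ(y_k − y_l))_{k,l=1,…,N}, and C = I − (1/N) 𝟙 with 𝟙 the N×N all-ones matrix and I the N×N identity matrix. -/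
open MeasureTheory Matrix
open scoped ENNReal RealInnerProductSpace

/-!
The centering matrix `C` is symmetric and idempotent, so by cyclicity of the trace the
Frobenius product `⟪CaC, CbC⟫ = tr(bᵀ CaC)` equals `⟪CaC, b⟫`. Expanding `CaC` entrywise,
this is `⟪a, b⟫ - N⁻¹ (row sums)·(row sums) - N⁻¹ (column sums)·(column sums) + N⁻² Σa Σb`,
while the quadruple sum is `N² ⟪a, b⟫ - 2N (row sums)·(row sums) + Σa Σb`. The two agree
because `Φ` and `Ψ` are even (cosine is), so `a` and `b` are symmetric and their row sums
are their column sums.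
-/

open Finset

theorem Matrix.trace_transpose_mul_eq_sum {m n R : Type*} [Fintype m] [Fintype n]
    [CommSemiring R] (A B : Matrix m n R) : trace (Bᵀ * A) = ∑ k, ∑ l, A k l * B k l := by
  simp only [trace, diag, mul_apply, transpose_apply, mul_comm (B _ _)]
  exact Finset.sum_comm

theorem Function.Even.isSymm_of_sub {ι G α : Type*} [AddGroup G] {f : G → α} (hf : f.Even)
    (x : ι → G) : (of fun k l => f (x k - x l)).IsSymm :=
  IsSymm.ext fun k l => by simp only [of_apply, ← hf (x l - x k), neg_sub]

theorem sum_sample_dCov_summand {ι R : Type*} [Fintype ι] [CommRing R] (a b : Matrix ι ι R) :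
    ∑ i, ∑ j, ∑ k, ∑ l, (a i k * b i k - 2 * a i j * b i l + a i j * b k l)
      = (Fintype.card ι : R) ^ 2 * ∑ k, ∑ l, a k l * b k l
        - 2 * (Fintype.card ι : R) * ∑ k, (∑ l, a k l) * ∑ l, b k l
        + (∑ k, ∑ l, a k l) * ∑ k, ∑ l, b k l := by
  simp only [sum_add_distrib, sum_sub_distrib, sum_const, card_univ, nsmul_eq_mul, mul_assoc,
    ← mul_sum, ← sum_mul]
  ring

section Centering

variable {ι R : Type*} [Fintype ι] [DecidableEq ι] [Field R]

variable (ι R) in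
noncomputable def centeringMatrix : Matrix ι ι R :=
  1 - (Fintype.card ι : R)⁻¹ • of fun _ _ => 1

local notation "N" => (Fintype.card ι : R)
local notation "C" => centeringMatrix ι R

theorem centeringMatrix_transpose : Cᵀ = C := by
  simp [centeringMatrix, ← Matrix.ext_iff]

theorem transpose_centeringMatrix_mul_mul_apply (M : Matrix ι ι R) (k l : ι) :
    (Cᵀ * M * C) k l
      = M k l - N⁻¹ * ∑ q, M k q - N⁻¹ * ∑ p, M p l + N⁻¹ ^ 2 * ∑ p, ∑ q, M p q := by
  simp only [centeringMatrix, smul_of, transpose_sub, transpose_one, sub_mul, one_mul, mul_apply,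
    Matrix.sub_apply, transpose_apply, of_apply, Pi.smul_apply, smul_eq_mul, mul_one, ← mul_sum,
    one_apply, mul_sub, mul_ite, mul_zero, sum_sub_distrib, sum_ite_eq', mem_univ, if_true,
    ← sum_mul, inv_pow]
  rw [Finset.sum_comm]
  ring

theorem centeringMatrix_mul_self (hN : N ≠ 0) : C * C = C := by
  ext k l
  have h := transpose_centeringMatrix_mul_mul_apply (1 : Matrix ι ι R) k l
  rw [Matrix.mul_one, centeringMatrix_transpose] at h
  rw [h]
  simp only [centeringMatrix, Matrix.sub_apply, Matrix.smul_apply, of_apply, smul_eq_mul,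
    one_apply, sum_ite_eq, sum_ite_eq', mem_univ, if_true, sum_const, card_univ, nsmul_eq_mul,
    mul_one]
  field_simp
  ring

theorem sum_centered_mul_centered (hN : N ≠ 0) (a b : Matrix ι ι R) :
    ∑ k, ∑ l, (Cᵀ * a * C) k l * (Cᵀ * b * C) k l = ∑ k, ∑ l, (Cᵀ * a * C) k l * b k l := by
  simp only [← trace_transpose_mul_eq_sum]
  calc trace ((Cᵀ * b * C)ᵀ * (Cᵀ * a * C)) = trace (C * (bᵀ * (C * C * a * C))) := by
        simp only [transpose_mul, centeringMatrix_transpose, Matrix.mul_assoc]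
    _ = trace (bᵀ * (C * C * a * (C * C))) := by
        rw [trace_mul_comm]; simp only [Matrix.mul_assoc]
    _ = trace (bᵀ * (Cᵀ * a * C)) := by
        rw [centeringMatrix_mul_self hN, centeringMatrix_transpose]

theorem sum_centered_mul (a b : Matrix ι ι R) :
    ∑ k, ∑ l, (Cᵀ * a * C) k l * b k l
      = ∑ k, ∑ l, a k l * b k l - N⁻¹ * ∑ k, (∑ l, a k l) * ∑ l, b k l
        - N⁻¹ * ∑ l, (∑ k, a k l) * ∑ k, b k l
        + N⁻¹ ^ 2 * ((∑ k, ∑ l, a k l) * ∑ k, ∑ l, b k l) := by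
  have hcol : ∑ k, ∑ l, (∑ p, a p l) * b k l = ∑ l, (∑ k, a k l) * ∑ k, b k l := by
    rw [Finset.sum_comm]
    simp only [mul_sum]
  simp only [transpose_centeringMatrix_mul_mul_apply, sub_mul, add_mul, sum_add_distrib,
    sum_sub_distrib, mul_assoc, ← mul_sum, hcol]

theorem sample_dCov_eq_sum_centered_mul_centered {a b : Matrix ι ι R} (ha : a.IsSymm)
    (hb : b.IsSymm) :
    1 / N ^ 4 * ∑ i, ∑ j, ∑ k, ∑ l, (a i k * b i k - 2 * a i j * b i l + a i j * b k l)
      = 1 / N ^ 2 * ∑ k, ∑ l, (Cᵀ * a * C) k l * (Cᵀ * b * C) k l := by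
  rcases eq_or_ne N 0 with hN | hN
  · simp [hN]
  have hcol : ∑ l, (∑ k, a k l) * ∑ k, b k l = ∑ k, (∑ l, a k l) * ∑ l, b k l := by
    simp only [← ha.apply, ← hb.apply]
  rw [sum_sample_dCov_summand, sum_centered_mul_centered hN, sum_centered_mul, hcol]
  field_simp
  ring

end Centering

theorem sample_gdCov_matrix_repr_general {m n : ℕ}
    (μ : Measure (EuclideanSpace ℝ (Fin m))) (ν : Measure (EuclideanSpace ℝ (Fin n)))
    (Φ : EuclideanSpace ℝ (Fin m) → ℝ) (Ψ : EuclideanSpace ℝ (Fin n) → ℝ)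
    (hΦ : ∀ x, Φ x = ∫ s, (1 - Real.cos ⟪x, s⟫) ∂μ)
    (hΨ : ∀ y, Ψ y = ∫ t, (1 - Real.cos ⟪y, t⟫) ∂ν)
    (N : ℕ) (x : Fin N → EuclideanSpace ℝ (Fin m))
    (y : Fin N → EuclideanSpace ℝ (Fin n)) :
    let a : Matrix (Fin N) (Fin N) ℝ := Matrix.of fun k l => Φ (x k - x l)
    let b : Matrix (Fin N) (Fin N) ℝ := Matrix.of fun k l => Ψ (y k - y l)
    let C : Matrix (Fin N) (Fin N) ℝ := 1 - (N : ℝ)⁻¹ • Matrix.of fun _ _ => (1 : ℝ)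
    let A : Matrix (Fin N) (Fin N) ℝ := Cᵀ * a * C
    let B : Matrix (Fin N) (Fin N) ℝ := Cᵀ * b * C
    (1 / (N : ℝ) ^ 4) * ∑ i, ∑ j, ∑ k, ∑ l,
        (Φ (x i - x k) * Ψ (y i - y k) - 2 * Φ (x i - x j) * Ψ (y i - y l)
          + Φ (x i - x j) * Ψ (y k - y l))
      = (1 / (N : ℝ) ^ 2) * Matrix.trace (Bᵀ * A) ∧
    (1 / (N : ℝ) ^ 4) * ∑ i, ∑ j, ∑ k, ∑ l,
        (Φ (x i - x k) * Ψ (y i - y k) - 2 * Φ (x i - x j) * Ψ (y i - y l)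
          + Φ (x i - x j) * Ψ (y k - y l))
      = (1 / (N : ℝ) ^ 2) * ∑ k, ∑ l, A k l * B k l := by
  intro a b C A B
  have hΦ_even : Φ.Even := fun u => by simp only [hΦ, inner_neg_left, Real.cos_neg]
  have hΨ_even : Ψ.Even := fun u => by simp only [hΨ, inner_neg_left, Real.cos_neg]
  have key := sample_dCov_eq_sum_centered_mul_centered (hΦ_even.isSymm_of_sub x)
    (hΨ_even.isSymm_of_sub y)
  simp only [centeringMatrix, Fintype.card_fin] at key
  exact ⟨by rw [trace_transpose_mul_eq_sum]; exact key, key⟩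

/-- Let `Φ, Ψ` be the cndfs of finite symmetric Lévy measures with full support, and
`(x₁,y₁), …, (x_N,y_N)` a sample. The sample generalized distance covariance
`V̂_N² = N⁻⁴ Σ_{i,j,k,l} [Φ(x_i-x_k)Ψ(y_i-y_k) - 2Φ(x_i-x_j)Ψ(y_i-y_l) + Φ(x_i-x_j)Ψ(y_k-y_l)]`
equals `N⁻² trace(Bᵀ A) = N⁻² Σ_{k,l} A_{kl} B_{kl}` with `A = Cᵀ a C`, `B = Cᵀ b C`,
`a = (Φ(x_k - x_l))_{k,l}`, `b = (Ψ(y_k - y_l))_{k,l}` and `C = I - N⁻¹ 𝟙`. -/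
theorem sample_gdCov_matrix_repr {m n : ℕ}
    (μ : Measure (EuclideanSpace ℝ (Fin m))) (ν : Measure (EuclideanSpace ℝ (Fin n)))
    [IsFiniteMeasure μ] [IsFiniteMeasure ν]
    (hμ0 : μ {0} = 0) (hν0 : ν {0} = 0)
    (hμsym : IsSymmetricMeasure μ) (hνsym : IsSymmetricMeasure ν)
    (hμfull : HasFullSupportOffZero μ) (hνfull : HasFullSupportOffZero ν)
    (Φ : EuclideanSpace ℝ (Fin m) → ℝ) (Ψ : EuclideanSpace ℝ (Fin n) → ℝ)
    (hΦ : ∀ x, Φ x = ∫ s, (1 - Real.cos ⟪x, s⟫) ∂μ)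
    (hΨ : ∀ y, Ψ y = ∫ t, (1 - Real.cos ⟪y, t⟫) ∂ν)
    (N : ℕ) (x : Fin N → EuclideanSpace ℝ (Fin m))
    (y : Fin N → EuclideanSpace ℝ (Fin n)) :
    let a : Matrix (Fin N) (Fin N) ℝ := Matrix.of fun k l => Φ (x k - x l)
    let b : Matrix (Fin N) (Fin N) ℝ := Matrix.of fun k l => Ψ (y k - y l)
    let C : Matrix (Fin N) (Fin N) ℝ := 1 - (N : ℝ)⁻¹ • Matrix.of fun _ _ => (1 : ℝ)
    let A : Matrix (Fin N) (Fin N) ℝ := Cᵀ * a * C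
    let B : Matrix (Fin N) (Fin N) ℝ := Cᵀ * b * C
    (1 / (N : ℝ) ^ 4) * ∑ i, ∑ j, ∑ k, ∑ l,
        (Φ (x i - x k) * Ψ (y i - y k) - 2 * Φ (x i - x j) * Ψ (y i - y l)
          + Φ (x i - x j) * Ψ (y k - y l))
      = (1 / (N : ℝ) ^ 2) * Matrix.trace (Bᵀ * A) ∧
    (1 / (N : ℝ) ^ 4) * ∑ i, ∑ j, ∑ k, ∑ l,
        (Φ (x i - x k) * Ψ (y i - y k) - 2 * Φ (x i - x j) * Ψ (y i - y l)
          + Φ (x i - x j) * Ψ (y k - y l))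
      = (1 / (N : ℝ) ^ 2) * ∑ k, ∑ l, A k l * B k l :=
  sample_gdCov_matrix_repr_general μ ν Φ Ψ hΦ hΨ N x y
end
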